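/- arXiv:1502.00159 — 2 statements merged into one kernel-verified Lean document; each statement's English description precedes it below -/
import Mathlib

section
/- Let (X,μ) be a measure space, 0<q≤∞ and J ⊆ (0,∞) with m_J = inf J > 0. If m_J ∈ J and M_J = sup J ∉ J (with M_J < ∞), then ⋂_{p∈J} L_{p,q}(X,μ) = ⋂_{p∈[m_J,M_J)} L_{p,q}(X,μ). -/
open MeasureTheory Set ENNReal

noncomputable section

variable {X : Type*} [MeasurableSpace X]

/-- The distribution function `d_f(α) = μ {x : |f x| > α}`. -/
def distFun (μ : Measure X) (f : X → ℝ) (α : ℝ) : ℝ≥0∞ :=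
  μ {x | α < |f x|}

/-- The decreasing rearrangement `f*(t) = inf {s > 0 : d_f(s) ≤ t}`, with `inf ∅ = ∞`. -/
def rearr (μ : Measure X) (f : X → ℝ) (t : ℝ) : ℝ≥0∞ :=
  ⨅ (s : ℝ) (_ : 0 < s ∧ distFun μ f s ≤ ENNReal.ofReal t), ENNReal.ofReal s

/-- The Lorentz quasi-norm `‖f‖_{L_{p,q}}` (for `q = ∞` the weak norm `sup_t t^{1/p} f*(t)`). -/
def lorentzNorm (μ : Measure X) (f : X → ℝ) (p q : ℝ≥0∞) : ℝ≥0∞ :=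
  if q = ∞ then ⨆ t ∈ Ioi (0 : ℝ), ENNReal.ofReal t ^ (1 / p).toReal * rearr μ f t
  else (∫⁻ t in Ioi (0 : ℝ),
      (ENNReal.ofReal t ^ (1 / p).toReal * rearr μ f t) ^ q.toReal / ENNReal.ofReal t) ^
      (1 / q.toReal)

/-- The Lorentz space `L_{p,q}(X, μ)`, as the set of measurable functions with
finite Lorentz quasi-norm. -/
def Lorentz (μ : Measure X) (p q : ℝ≥0∞) : Set (X → ℝ) :=
  {f | Measurable f ∧ lorentzNorm μ f p q < ∞}

/-! For `p₀ ≤ p ≤ p₁` the power `t ^ (1/p)` lies below `max (t ^ (1/p₀)) (t ^ (1/p₁))`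
(split at `t = 1`), so `t ^ (1/p) f*(t)` is pointwise dominated by the larger of the
corresponding functions for `p₀` and `p₁`: finiteness of the `L_{p₀,q}` and `L_{p₁,q}`
quasi-norms gives finiteness of the `L_{p,q}` one. Every `p ∈ [m_J, M_J)` lies between
`m_J ∈ J` and some `p₁ ∈ J` with `p < p₁`; conversely `J ⊆ [m_J, M_J)` because `M_J ∉ J`. -/

theorem rearr_antitone (μ : Measure X) (f : X → ℝ) : Antitone (rearr μ f) :=
  fun _ _ h => le_iInf₂ fun s hs =>
    iInf₂_le_of_le s ⟨hs.1, hs.2.trans (ofReal_le_ofReal h)⟩ le_rfl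

theorem ENNReal.rpow_le_max_rpow_of_le_of_le (x : ℝ≥0∞) {a b c : ℝ} (hac : a ≤ c)
    (hcb : c ≤ b) :
    x ^ c ≤ max (x ^ a) (x ^ b) := by
  rcases le_total x 1 with hx | hx
  · exact le_max_of_le_left (ENNReal.rpow_le_rpow_of_exponent_ge hx hac)
  · exact le_max_of_le_right (ENNReal.rpow_le_rpow_of_exponent_le hx hcb)

theorem toReal_one_div_le_toReal_one_div {p p' : ℝ≥0∞} (hp : p ≠ 0) (h : p ≤ p') :
    (1 / p').toReal ≤ (1 / p).toReal :=
  ENNReal.toReal_mono (by simp [hp]) (ENNReal.div_le_div_left h 1)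

def weightedRearr (μ : Measure X) (f : X → ℝ) (p : ℝ≥0∞) (t : ℝ) : ℝ≥0∞ :=
  ENNReal.ofReal t ^ (1 / p).toReal * rearr μ f t

theorem lorentzNorm_eq (μ : Measure X) (f : X → ℝ) (p q : ℝ≥0∞) :
    lorentzNorm μ f p q = if q = ∞ then ⨆ t ∈ Ioi (0 : ℝ), weightedRearr μ f p t
      else (∫⁻ t in Ioi (0 : ℝ), weightedRearr μ f p t ^ q.toReal / ENNReal.ofReal t) ^
        (1 / q.toReal) :=
  rfl

theorem measurable_weightedRearr (μ : Measure X) (f : X → ℝ) (p : ℝ≥0∞) :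
    Measurable (weightedRearr μ f p) :=
  (ENNReal.continuous_rpow_const.measurable.comp measurable_ofReal).mul
    (rearr_antitone μ f).measurable

section Interpolation

variable (μ : Measure X) (f : X → ℝ) {p₀ p p₁ : ℝ≥0∞}
  (h₀ : p₀ ≠ 0) (hp₀ : p₀ ≤ p) (hp₁ : p ≤ p₁)
include h₀ hp₀ hp₁

theorem weightedRearr_le_max (t : ℝ) :
    weightedRearr μ f p t ≤ max (weightedRearr μ f p₀ t) (weightedRearr μ f p₁ t) := by
  have hp : p ≠ 0 := (pos_iff_ne_zero.mpr h₀).trans_le hp₀ |>.ne'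
  rw [weightedRearr, weightedRearr, weightedRearr, ← max_mul_of_nonneg _ _ zero_le, max_comm]
  exact mul_le_mul_left (ENNReal.rpow_le_max_rpow_of_le_of_le _
    (toReal_one_div_le_toReal_one_div hp hp₁) (toReal_one_div_le_toReal_one_div h₀ hp₀)) _

theorem iSup_weightedRearr_le_max :
    ⨆ t ∈ Ioi (0 : ℝ), weightedRearr μ f p t ≤
      max (⨆ t ∈ Ioi (0 : ℝ), weightedRearr μ f p₀ t)
        (⨆ t ∈ Ioi (0 : ℝ), weightedRearr μ f p₁ t) :=
  iSup₂_le fun t ht => (weightedRearr_le_max μ f h₀ hp₀ hp₁ t).trans <|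
    max_le_max (le_iSup₂ (f := fun t (_ : t ∈ Ioi (0 : ℝ)) => weightedRearr μ f p₀ t) t ht)
      (le_iSup₂ (f := fun t (_ : t ∈ Ioi (0 : ℝ)) => weightedRearr μ f p₁ t) t ht)

theorem setLIntegral_weightedRearr_le_add {r : ℝ} (hr : 0 ≤ r) :
    ∫⁻ t in Ioi (0 : ℝ), weightedRearr μ f p t ^ r / ENNReal.ofReal t ≤
      (∫⁻ t in Ioi (0 : ℝ), weightedRearr μ f p₀ t ^ r / ENNReal.ofReal t) +
        ∫⁻ t in Ioi (0 : ℝ), weightedRearr μ f p₁ t ^ r / ENNReal.ofReal t := by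
  have hmeas : Measurable fun t => weightedRearr μ f p₀ t ^ r / ENNReal.ofReal t :=
    ((measurable_weightedRearr μ f p₀).pow_const r).div measurable_ofReal
  rw [← lintegral_add_left hmeas]
  refine lintegral_mono fun t => ?_
  rw [← ENNReal.add_div]
  gcongr
  calc weightedRearr μ f p t ^ r
      ≤ max (weightedRearr μ f p₀ t) (weightedRearr μ f p₁ t) ^ r :=
        ENNReal.rpow_le_rpow (weightedRearr_le_max μ f h₀ hp₀ hp₁ t) hr
    _ = max (weightedRearr μ f p₀ t ^ r) (weightedRearr μ f p₁ t ^ r) := ENNReal.max_rpow hr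
    _ ≤ weightedRearr μ f p₀ t ^ r + weightedRearr μ f p₁ t ^ r :=
        max_le_add_of_nonneg zero_le zero_le

theorem lorentzNorm_lt_top_of_le_of_le (q : ℝ≥0∞)
    (hf₀ : lorentzNorm μ f p₀ q < ∞) (hf₁ : lorentzNorm μ f p₁ q < ∞) :
    lorentzNorm μ f p q < ∞ := by
  rw [lorentzNorm_eq] at *
  by_cases hq : q = ∞
  · simp only [if_pos hq] at *
    exact (iSup_weightedRearr_le_max μ f h₀ hp₀ hp₁).trans_lt (max_lt hf₀ hf₁)
  simp only [if_neg hq] at *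
  -- for `q = 0` the quasi-norm is `x ^ (1 / 0) = x ^ 0 = 1`
  rcases eq_or_ne q 0 with rfl | hq₀
  · simp
  have hr : 0 < 1 / q.toReal := one_div_pos.mpr (toReal_pos hq₀ hq)
  rw [rpow_lt_top_iff_of_pos hr] at *
  exact (setLIntegral_weightedRearr_le_add μ f h₀ hp₀ hp₁ toReal_nonneg).trans_lt
    (add_lt_top.mpr ⟨hf₀, hf₁⟩)

end Interpolation

theorem stmt7_general (μ : Measure X) (q : ℝ≥0∞) (J : Set ℝ≥0∞)
    (hm : 0 < sInf J) (hmJ : sInf J ∈ J) (hMJ : sSup J ∉ J) :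
    (⋂ p ∈ J, Lorentz μ p q) = ⋂ p ∈ Ico (sInf J) (sSup J), Lorentz μ p q := by
  have hJ_sub : J ⊆ Ico (sInf J) (sSup J) := fun p hp =>
    ⟨sInf_le hp, (le_sSup hp).lt_of_ne fun h => hMJ (h ▸ hp)⟩
  refine Subset.antisymm (fun f hf => ?_) (biInter_subset_biInter_left hJ_sub)
  simp only [mem_iInter] at hf ⊢
  intro p hp
  obtain ⟨p₁, hp₁J, hpp₁⟩ := lt_sSup_iff.mp hp.2
  exact ⟨(hf _ hmJ).1, lorentzNorm_lt_top_of_le_of_le μ f hm.ne' hp.1 hpp₁.le q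
    (hf _ hmJ).2 (hf _ hp₁J).2⟩

/-- If `m_J ∈ J` and `M_J ∉ J` (`M_J < ∞`) then
`⋂_{p∈J} L_{p,q} = ⋂_{p∈[m_J,M_J)} L_{p,q}`. -/
theorem stmt7 (μ : Measure X) (q : ℝ≥0∞) (hq : 0 < q) (J : Set ℝ≥0∞)
    (hJ : J ⊆ Ioo 0 ∞) (hm : 0 < sInf J) (hmJ : sInf J ∈ J) (hMJ : sSup J ∉ J)
    (hM : sSup J ≠ ∞) :
    (⋂ p ∈ J, Lorentz μ p q) = ⋂ p ∈ Ico (sInf J) (sSup J), Lorentz μ p q :=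
  stmt7_general μ q J hm hmJ hMJ
end
end

section
/- Let 1 ≤ p < ∞ and Q ⊆ [1,∞) nonempty with m_Q = inf Q. Then IL_{p,Q} = ℓ_{p,m_Q}, where IL_{p,Q} = {(x_i) ∈ ⋂_{q∈Q} ℓ_{p,q} : sup_{q∈Q} ‖(x_i)‖_{p,q} < ∞}; moreover, for every (x_i) ∈ ℓ_{p,m_Q}, ‖(x_i)‖_{p,m_Q} ≤ sup_{q∈Q} ‖(x_i)‖_{p,q} ≤ max{1, m_Q/p} · ‖(x_i)‖_{p,m_Q}. -/
/-!
Let `aₖ` be the non-increasing rearrangement and `S_s = ∑ₖ (k+1)^(s/p-1) aₖ^s`, so that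
`‖x‖_{p,s} = S_s^(1/s)`, and let `m = inf Q`. Telescoping
`(k+1)^β - k^β ≤ max{1, β} (k+1)^(β-1)` and using that `a` is non-increasing gives the
weak-type bound `(k+1)^(m/p) aₖ^m ≤ max{1, m/p} S_m`. For `q ≥ m`, writing
`(k+1)^(q/p-1) aₖ^q = ((k+1)^(m/p) aₖ^m)^((q-m)/m) (k+1)^(m/p-1) aₖ^m` then yields
`S_q^(1/q) ≤ max{1, m/p} S_m^(1/m)`. Conversely `s ↦ S_s` is lower semicontinuous, being a sum
of continuous nonnegative terms, and `m` lies in the closure of `Q`, so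
`S_m^(1/m) ≤ sup_{q ∈ Q} S_q^(1/q)`.
-/

open Set ENNReal Filter

noncomputable section

/-- The non-increasing rearrangement of `(|x i|)`, 0-indexed: the `k`-th value is
`inf {s > 0 : #{j : |x j| > s} ≤ k}`, with `inf ∅ = ∞`. -/
def seqRearr (x : ℕ → ℝ) (k : ℕ) : ℝ≥0∞ :=
  ⨅ (s : ℝ) (_ : 0 < s ∧ MeasureTheory.Measure.count {j : ℕ | s < |x j|} ≤ (k : ℝ≥0∞)),
    ENNReal.ofReal s

/-- The Lorentz sequence quasi-norm `‖x‖_{p,q}`; the `i`-th (1-based) term of the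
non-increasing rearrangement is `seqRearr x (i - 1)`, i.e. `seqRearr x k` with `i = k + 1`. -/
def seqLorentzNorm (x : ℕ → ℝ) (p q : ℝ≥0∞) : ℝ≥0∞ :=
  if q = ∞ then ⨆ k : ℕ, ((k : ℝ≥0∞) + 1) ^ (1 / p).toReal * seqRearr x k
  else (∑' k : ℕ, ((k : ℝ≥0∞) + 1) ^ ((q / p).toReal - 1) * seqRearr x k ^ q.toReal) ^
    (1 / q.toReal)

/-- The Lorentz sequence space `ℓ_{p,q}`: null sequences with finite Lorentz quasi-norm. -/
def seqLorentz (p q : ℝ≥0∞) : Set (ℕ → ℝ) :=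
  {x | Tendsto x atTop (nhds 0) ∧ seqLorentzNorm x p q < ∞}

open Topology

lemma Real.one_sub_rpow_le_max_mul (β : ℝ) {x : ℝ} (hx0 : 0 < x) (hx1 : x ≤ 1) :
    1 - x ^ β ≤ max 1 β * (1 - x) := by
  rcases le_total β 1 with hβ | hβ
  · have hx : x ≤ x ^ β := by simpa using Real.rpow_le_rpow_of_exponent_ge hx0 hx1 hβ
    nlinarith [le_max_left 1 β]
  · have bernoulli := one_add_mul_self_le_rpow_one_add (show (-1 : ℝ) ≤ x - 1 by linarith) hβ
    rw [add_sub_cancel] at bernoulli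
    rw [max_eq_right hβ]
    linarith

lemma Real.add_one_rpow_sub_rpow_le (β : ℝ) {a : ℝ} (ha : 0 < a) :
    (a + 1) ^ β - a ^ β ≤ max 1 β * (a + 1) ^ (β - 1) := by
  have hb : 0 < a + 1 := by linarith
  have hx : 0 < a / (a + 1) := div_pos ha hb
  have key := Real.one_sub_rpow_le_max_mul β hx ((div_le_one hb).2 (by linarith))
  have hsplit : a ^ β = (a + 1) ^ β * (a / (a + 1)) ^ β := by
    rw [← Real.mul_rpow hb.le hx.le, mul_div_cancel₀ _ hb.ne']
  have hpow : (a + 1) ^ (β - 1) = (a + 1) ^ β * (1 - a / (a + 1)) := by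
    rw [Real.rpow_sub_one hb.ne']
    field_simp
    ring
  calc (a + 1) ^ β - a ^ β = (a + 1) ^ β * (1 - (a / (a + 1)) ^ β) := by rw [hsplit]; ring
    _ ≤ (a + 1) ^ β * (max 1 β * (1 - a / (a + 1))) := by gcongr
    _ = max 1 β * (a + 1) ^ (β - 1) := by rw [hpow]; ring

lemma Real.add_one_rpow_le_max_mul_sum (β : ℝ) (n : ℕ) :
    ((n : ℝ) + 1) ^ β ≤ max 1 β * ∑ k ∈ Finset.range (n + 1), ((k : ℝ) + 1) ^ (β - 1) := by
  induction n with
  | zero => simp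
  | succ n ih =>
    rw [Finset.sum_range_succ, mul_add]
    push_cast
    have := Real.add_one_rpow_sub_rpow_le β (by positivity : (0 : ℝ) < n + 1)
    linarith

lemma ENNReal.natCast_add_one_rpow (k : ℕ) (γ : ℝ) :
    ((k : ℝ≥0∞) + 1) ^ γ = ENNReal.ofReal (((k : ℝ) + 1) ^ γ) := by
  rw [← ENNReal.ofReal_rpow_of_pos (by positivity), ENNReal.ofReal_add (by positivity) zero_le_one,
    ENNReal.ofReal_natCast, ENNReal.ofReal_one]

lemma ENNReal.continuousAt_const_rpow_of_ne {a : ℝ≥0∞} (ha0 : a ≠ 0) (ha : a ≠ ∞) (s : ℝ) :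
    ContinuousAt (fun t : ℝ => a ^ t) s := by
  have hpos : 0 < a.toReal := ENNReal.toReal_pos ha0 ha
  have heq : (fun t : ℝ => a ^ t) = fun t => ENNReal.ofReal (a.toReal ^ t) := funext fun t => by
    rw [← ENNReal.ofReal_rpow_of_pos hpos, ENNReal.ofReal_toReal ha]
  rw [heq]
  exact ENNReal.continuous_ofReal.continuousAt.comp (Real.continuousAt_const_rpow hpos.ne')

lemma ENNReal.continuousAt_const_rpow (a : ℝ≥0∞) {s : ℝ} (hs : 0 < s) :
    ContinuousAt (fun t : ℝ => a ^ t) s := by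
  have hpos : ∀ᶠ t in 𝓝 s, 0 < t := lt_mem_nhds hs
  rcases eq_or_ne a 0 with rfl | ha0
  · exact continuousAt_const.congr <| hpos.mono fun t ht => (ENNReal.zero_rpow_of_pos ht).symm
  rcases eq_or_ne a ∞ with rfl | ha
  · exact continuousAt_const.congr <| hpos.mono fun t ht => (ENNReal.top_rpow_of_pos ht).symm
  exact ENNReal.continuousAt_const_rpow_of_ne ha0 ha s

lemma LowerSemicontinuousAt.le_of_frequently_le {α β : Type*} [TopologicalSpace α]
    [LinearOrder β] [TopologicalSpace β] [OrderTopology β] [DenselyOrdered β] {f g : α → β}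
    {x : α} (hf : LowerSemicontinuousAt f x) (hg : ContinuousAt g x)
    (h : ∃ᶠ y in 𝓝 x, f y ≤ g y) : f x ≤ g x := by
  by_contra! hlt
  obtain ⟨c, hgc, hcf⟩ := exists_between hlt
  obtain ⟨y, hfg, hgf⟩ :=
    (h.and_eventually ((hg.eventually (gt_mem_nhds hgc)).and (hf c hcf))).exists
  exact hfg.not_gt (hgf.1.trans hgf.2)

def lorentzSum (a : ℕ → ℝ≥0∞) (P s : ℝ) : ℝ≥0∞ :=
  ∑' k : ℕ, ((k : ℝ≥0∞) + 1) ^ (s / P - 1) * a k ^ s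

lemma lowerSemicontinuousAt_lorentzSum (a : ℕ → ℝ≥0∞) (P : ℝ) {s : ℝ} (hs : 0 < s) :
    LowerSemicontinuousAt (lorentzSum a P) s := by
  refine lowerSemicontinuousAt_tsum fun k => ContinuousAt.lowerSemicontinuousAt ?_
  have hbase : ContinuousAt (fun t : ℝ => ((k : ℝ≥0∞) + 1) ^ (t / P - 1)) s :=
    (ENNReal.continuousAt_const_rpow_of_ne (by simp) (by simp) _).comp
      (f := fun t : ℝ => t / P - 1) (by fun_prop)
  exact ENNReal.Tendsto.mul hbase (.inl (by simp)) (ENNReal.continuousAt_const_rpow _ hs)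
    (.inr (by simp))

lemma lorentzSum_rpow_le_of_mem_closure (a : ℕ → ℝ≥0∞) (P : ℝ) {T : Set ℝ} {μ : ℝ} (hμ : 0 < μ)
    (hT : μ ∈ closure T) (hTpos : ∀ s ∈ T, 0 < s) {M : ℝ≥0∞}
    (hM : ∀ s ∈ T, lorentzSum a P s ^ (1 / s) ≤ M) : lorentzSum a P μ ^ (1 / μ) ≤ M := by
  rw [one_div, ENNReal.rpow_inv_le_iff hμ]
  refine (lowerSemicontinuousAt_lorentzSum a P hμ).le_of_frequently_le
    (ENNReal.continuousAt_const_rpow M hμ) ((mem_closure_iff_frequently.1 hT).mono fun s hs => ?_)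
  have := hM s hs
  rwa [one_div, ENNReal.rpow_inv_le_iff (hTpos s hs)] at this

namespace Antitone

variable {a : ℕ → ℝ≥0∞}

lemma add_one_rpow_mul_le_lorentzSum (ha : Antitone a) (P : ℝ) {s : ℝ} (hs : 0 ≤ s) (n : ℕ) :
    ((n : ℝ≥0∞) + 1) ^ (s / P) * a n ^ s ≤ ENNReal.ofReal (max 1 (s / P)) * lorentzSum a P s := by
  have hsum : ((n : ℝ≥0∞) + 1) ^ (s / P) ≤
      ENNReal.ofReal (max 1 (s / P)) *
        ∑ k ∈ Finset.range (n + 1), ((k : ℝ≥0∞) + 1) ^ (s / P - 1) := by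
    rw [Finset.sum_congr rfl fun k _ => ENNReal.natCast_add_one_rpow k _,
      ← ENNReal.ofReal_sum_of_nonneg fun k _ => by positivity, ENNReal.natCast_add_one_rpow,
      ← ENNReal.ofReal_mul (le_max_of_le_left zero_le_one)]
    exact ENNReal.ofReal_le_ofReal (Real.add_one_rpow_le_max_mul_sum _ n)
  set C := ENNReal.ofReal (max 1 (s / P))
  calc ((n : ℝ≥0∞) + 1) ^ (s / P) * a n ^ s
      ≤ C * ∑ k ∈ Finset.range (n + 1), ((k : ℝ≥0∞) + 1) ^ (s / P - 1) * a n ^ s := by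
        rw [← Finset.sum_mul, ← mul_assoc]
        gcongr
    _ ≤ C * ∑ k ∈ Finset.range (n + 1), ((k : ℝ≥0∞) + 1) ^ (s / P - 1) * a k ^ s := by
        gcongr with k hk
        exact ha (Nat.lt_succ_iff.mp (Finset.mem_range.mp hk))
    _ ≤ C * lorentzSum a P s := by
        gcongr
        exact ENNReal.sum_le_tsum _

lemma lorentzSum_le (ha : Antitone a) (P : ℝ) {μ ρ : ℝ} (hμ : 0 < μ) (hμρ : μ ≤ ρ) :
    lorentzSum a P ρ ≤
      (ENNReal.ofReal (max 1 (μ / P)) * lorentzSum a P μ) ^ ((ρ - μ) / μ) * lorentzSum a P μ := by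
  have he : 0 ≤ (ρ - μ) / μ := div_nonneg (by linarith) hμ.le
  have hsplit : ∀ k : ℕ, ((k : ℝ≥0∞) + 1) ^ (ρ / P - 1) * a k ^ ρ =
      (((k : ℝ≥0∞) + 1) ^ (μ / P) * a k ^ μ) ^ ((ρ - μ) / μ) *
        (((k : ℝ≥0∞) + 1) ^ (μ / P - 1) * a k ^ μ) := by
    intro k
    have e1 : ρ / P - 1 = μ / P * ((ρ - μ) / μ) + (μ / P - 1) := by field_simp; ring
    have e2 : ρ = μ * ((ρ - μ) / μ) + μ := by field_simp; ring
    rw [ENNReal.mul_rpow_of_nonneg _ _ he, ← ENNReal.rpow_mul, ← ENNReal.rpow_mul,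
      mul_mul_mul_comm, ← ENNReal.rpow_add _ _ (by simp) (by simp),
      ← ENNReal.rpow_add_of_nonneg _ _ (by positivity) hμ.le, ← e1, ← e2]
  calc lorentzSum a P ρ
      = ∑' k : ℕ, (((k : ℝ≥0∞) + 1) ^ (μ / P) * a k ^ μ) ^ ((ρ - μ) / μ) *
          (((k : ℝ≥0∞) + 1) ^ (μ / P - 1) * a k ^ μ) := tsum_congr hsplit
    _ ≤ ∑' k : ℕ, (ENNReal.ofReal (max 1 (μ / P)) * lorentzSum a P μ) ^ ((ρ - μ) / μ) *
          (((k : ℝ≥0∞) + 1) ^ (μ / P - 1) * a k ^ μ) := by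
        refine ENNReal.tsum_le_tsum fun k => ?_
        gcongr ?_ ^ _ * _
        exact ha.add_one_rpow_mul_le_lorentzSum P hμ.le k
    _ = _ := ENNReal.tsum_mul_left

lemma lorentzSum_rpow_le (ha : Antitone a) (P : ℝ) {μ ρ : ℝ} (hμ : 1 ≤ μ) (hμρ : μ ≤ ρ) :
    lorentzSum a P ρ ^ (1 / ρ) ≤ ENNReal.ofReal (max 1 (μ / P)) * lorentzSum a P μ ^ (1 / μ) := by
  set C := ENNReal.ofReal (max 1 (μ / P))
  set S := lorentzSum a P μ
  have hμ0 : 0 < μ := by linarith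
  have hρ0 : 0 < ρ := by linarith
  have he : 0 ≤ (ρ - μ) / μ := div_nonneg (by linarith) hμ0.le
  have hC : 1 ≤ C := by simp [C]
  have hexp_le : (ρ - μ) / μ * (1 / ρ) ≤ 1 := by
    rw [div_mul_div_comm, mul_one, div_le_one (by positivity)]
    nlinarith
  have hexp_nonneg : 0 ≤ (ρ - μ) / μ * (1 / ρ) := mul_nonneg he (by positivity)
  have hexp_eq : (ρ - μ) / μ * (1 / ρ) + 1 / ρ = 1 / μ := by field_simp; ring
  calc lorentzSum a P ρ ^ (1 / ρ) ≤ ((C * S) ^ ((ρ - μ) / μ) * S) ^ (1 / ρ) := by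
        gcongr
        exact ha.lorentzSum_le P hμ0 hμρ
    _ = C ^ ((ρ - μ) / μ * (1 / ρ)) * S ^ (1 / μ) := by
        rw [ENNReal.mul_rpow_of_nonneg _ _ (by positivity), ← ENNReal.rpow_mul,
          ENNReal.mul_rpow_of_nonneg _ _ hexp_nonneg, mul_assoc,
          ← ENNReal.rpow_add_of_nonneg _ _ hexp_nonneg (by positivity), hexp_eq]
    _ ≤ C * S ^ (1 / μ) := by
        gcongr
        simpa using ENNReal.rpow_le_rpow_of_exponent_le hC hexp_le

end Antitone

lemma seqRearr_antitone (x : ℕ → ℝ) : Antitone (seqRearr x) := by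
  intro i j hij
  refine le_iInf fun s => le_iInf fun hs => ?_
  refine iInf_le_of_le s (iInf_le_of_le ⟨hs.1, hs.2.trans ?_⟩ le_rfl)
  exact_mod_cast hij

lemma seqLorentzNorm_of_ne_top (x : ℕ → ℝ) (p : ℝ≥0∞) {q : ℝ≥0∞} (hq : q ≠ ∞) :
    seqLorentzNorm x p q = lorentzSum (seqRearr x) p.toReal q.toReal ^ (1 / q.toReal) := by
  rw [seqLorentzNorm, if_neg hq, ENNReal.toReal_div, lorentzSum]

lemma seqLorentzNorm_le_max_mul (x : ℕ → ℝ) {p m q : ℝ≥0∞} (hp : p ≠ 0) (hm : 1 ≤ m)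
    (hmq : m ≤ q) (hq : q ≠ ∞) :
    seqLorentzNorm x p q ≤ max 1 (m / p) * seqLorentzNorm x p m := by
  have hmtop : m ≠ ∞ := ne_top_of_le_ne_top hq hmq
  have hC : max 1 (m / p) = ENNReal.ofReal (max 1 (m.toReal / p.toReal)) := by
    rw [ENNReal.ofReal_max, ENNReal.ofReal_one, ← ENNReal.toReal_div,
      ENNReal.ofReal_toReal (ENNReal.div_ne_top hmtop hp)]
  rw [seqLorentzNorm_of_ne_top x p hq, seqLorentzNorm_of_ne_top x p hmtop, hC]
  exact (seqRearr_antitone x).lorentzSum_rpow_le _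
    (ENNReal.toReal_one ▸ ENNReal.toReal_mono hmtop hm) (ENNReal.toReal_mono hq hmq)

lemma seqLorentzNorm_sInf_le_iSup (x : ℕ → ℝ) (p : ℝ≥0∞) {Q : Set ℝ≥0∞} (hQne : Q.Nonempty)
    (hQ : Q ⊆ Ico 1 ∞) :
    seqLorentzNorm x p (sInf Q) ≤ ⨆ q ∈ Q, seqLorentzNorm x p q := by
  obtain ⟨q0, hq0⟩ := hQne
  have hmtop : sInf Q ≠ ∞ := ((sInf_le hq0).trans_lt (hQ hq0).2).ne
  have hpos : ∀ q, 1 ≤ q → q ≠ ∞ → 0 < q.toReal := fun q h1 htop =>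
    ENNReal.toReal_pos (one_pos.trans_le h1).ne' htop
  rw [seqLorentzNorm_of_ne_top x p hmtop]
  refine lorentzSum_rpow_le_of_mem_closure _ _ (hpos _ (le_sInf fun q hq => (hQ hq).1) hmtop)
    (mem_closure_image (ENNReal.continuousAt_toReal hmtop) (sInf_mem_closure ⟨q0, hq0⟩))
    (forall_mem_image.2 fun q hq => hpos q (hQ hq).1 (hQ hq).2.ne)
    (forall_mem_image.2 fun q hq => ?_)
  rw [← seqLorentzNorm_of_ne_top x p (hQ hq).2.ne]
  exact le_iSup₂ (f := fun q _ => seqLorentzNorm x p q) q hq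

theorem stmt17_general (p : ℝ≥0∞) (hp1 : 1 ≤ p)
    (Q : Set ℝ≥0∞) (hQne : Q.Nonempty) (hQ : Q ⊆ Ico 1 ∞) :
    {x : ℕ → ℝ | (∀ q ∈ Q, x ∈ seqLorentz p q) ∧
        (⨆ q ∈ Q, seqLorentzNorm x p q) < ∞}
      = seqLorentz p (sInf Q) ∧
    ∀ x ∈ seqLorentz p (sInf Q),
      seqLorentzNorm x p (sInf Q) ≤ (⨆ q ∈ Q, seqLorentzNorm x p q) ∧
      (⨆ q ∈ Q, seqLorentzNorm x p q) ≤
        max 1 (sInf Q / p) * seqLorentzNorm x p (sInf Q) := by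
  obtain ⟨q0, hq0⟩ := hQne
  have hp0 : p ≠ 0 := (one_pos.trans_le hp1).ne'
  have hm1 : 1 ≤ sInf Q := le_sInf fun q hq => (hQ hq).1
  have hmtop : sInf Q ≠ ∞ := ((sInf_le hq0).trans_lt (hQ hq0).2).ne
  have hC : max 1 (sInf Q / p) ≠ ∞ := max_ne_top ENNReal.one_ne_top (ENNReal.div_ne_top hmtop hp0)
  have lower x := seqLorentzNorm_sInf_le_iSup x p ⟨q0, hq0⟩ hQ
  have upper (x : ℕ → ℝ) :
      (⨆ q ∈ Q, seqLorentzNorm x p q) ≤ max 1 (sInf Q / p) * seqLorentzNorm x p (sInf Q) :=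
    iSup₂_le fun q hq => seqLorentzNorm_le_max_mul x hp0 hm1 (sInf_le hq) (hQ hq).2.ne
  refine ⟨Set.ext fun x => ⟨fun ⟨hx, hsup⟩ => ?_, fun ⟨hx0, hxm⟩ => ?_⟩,
    fun x _ => ⟨lower x, upper x⟩⟩
  · exact ⟨(hx q0 hq0).1, (lower x).trans_lt hsup⟩
  · have hsup := (upper x).trans_lt (ENNReal.mul_lt_top hC.lt_top hxm)
    exact ⟨fun q hq => ⟨hx0, (le_iSup₂ (f := fun q _ => seqLorentzNorm x p q) q hq).trans_lt hsup⟩,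
      hsup⟩

/-- `IL_{p,Q} = ℓ_{p,m_Q}`, together with
`‖x‖_{p,m_Q} ≤ sup_{q∈Q} ‖x‖_{p,q} ≤ max{1, m_Q/p} ‖x‖_{p,m_Q}`. -/
theorem stmt17 (p : ℝ≥0∞) (hp1 : 1 ≤ p) (hp : p ≠ ∞)
    (Q : Set ℝ≥0∞) (hQne : Q.Nonempty) (hQ : Q ⊆ Ico 1 ∞) :
    {x : ℕ → ℝ | (∀ q ∈ Q, x ∈ seqLorentz p q) ∧
        (⨆ q ∈ Q, seqLorentzNorm x p q) < ∞}
      = seqLorentz p (sInf Q) ∧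
    ∀ x ∈ seqLorentz p (sInf Q),
      seqLorentzNorm x p (sInf Q) ≤ (⨆ q ∈ Q, seqLorentzNorm x p q) ∧
      (⨆ q ∈ Q, seqLorentzNorm x p q) ≤
        max 1 (sInf Q / p) * seqLorentzNorm x p (sInf Q) :=
  stmt17_general p hp1 Q hQne hQ
end
end
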